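/- For any finite group G, the width of G (the size of a minimal generating set of the complete transfer system) equals the number of conjugacy classes of meet-irreducible subgroups of G; a minimal generating set is given by choosing one pair (I,G) for each conjugacy class of meet-irreducible proper behavior subgroups I. -/

import Mathlib

/-- Conjugate of a subgroup: `H^g`. -/
def conjSub {G : Type*} [Group G] (g : G) (H : Subgroup G) : Subgroup G :=
  H.map (MulAut.conj g).toMonoidHom

/-- A `G`-transfer system: a set of pairs `(K, H)` of subgroups with `K ≤ H`, containing all
identity pairs and closed under composition, conjugation, and restriction. -/
def IsTransferSystem {G : Type*} [Group G] (T : Set (Subgroup G × Subgroup G)) : Prop :=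
  (∀ p ∈ T, p.1 ≤ p.2) ∧
  (∀ H : Subgroup G, (H, H) ∈ T) ∧
  (∀ L K H : Subgroup G, (L, K) ∈ T → (K, H) ∈ T → (L, H) ∈ T) ∧
  (∀ K H : Subgroup G, (K, H) ∈ T → ∀ g : G, (conjSub g K, conjSub g H) ∈ T) ∧
  (∀ K H : Subgroup G, (K, H) ∈ T → ∀ L : Subgroup G, L ≤ H → (K ⊓ L, L) ∈ T)

/-- Rubin's closure: the smallest transfer system containing `S`. -/
def tsGen {G : Type*} [Group G] (S : Set (Subgroup G × Subgroup G)) :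
    Set (Subgroup G × Subgroup G) :=
  ⋂₀ {T | IsTransferSystem T ∧ S ⊆ T}

/-- `S` is a minimal generating set (of non-identity intervals) for the transfer system `T`. -/
def IsMinGenSet {G : Type*} [Group G] (S T : Set (Subgroup G × Subgroup G)) : Prop :=
  S ⊆ T ∧ (∀ p ∈ S, p.1 ≠ p.2) ∧ tsGen S = T ∧ ∀ s ∈ S, tsGen (S \ {s}) ⊂ T

/-- Total exponent (number of prime factors with multiplicity) of `n`. -/
def bigOmega (n : ℕ) : ℕ := n.primeFactorsList.length

/-- A proper subgroup is meet-irreducible if it is not the intersection of two strictly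
larger subgroups. -/
def MeetIrred {G : Type*} [Group G] (H : Subgroup G) : Prop :=
  H ≠ ⊤ ∧ ¬ ∃ A B : Subgroup G, H < A ∧ H < B ∧ H = A ⊓ B

/-- The complete transfer system: all pairs `(H, K)` with `H ≤ K`. -/
def completeTS (G : Type*) [Group G] : Set (Subgroup G × Subgroup G) :=
  {p | p.1 ≤ p.2}

/-!
For a meet-irreducible `I` put `I* = sInf (Set.Ioi I)`. As `I` is not the intersection of two
strictly larger subgroups, `I < I*`: `I*` is the unique cover of `I`. The pairs `(K, H)` that do
not lie over a conjugate of `(I, I*)` (that is, `K` is not conjugate to `I`, or `K* ≰ H`) form a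
transfer system `avoidTS I`, the largest one missing `(I, I*)`. Hence a set of pairs generates the
complete transfer system iff for every meet-irreducible `K` it has an element outside
`avoidTS K`: otherwise `(K, G)` is missing, and conversely `(K, G)` is reached by downward
induction on `K`, through `(K, K*)` when `K` is meet-irreducible and by restricting `(A, G)` to `B`
when `K = A ⊓ B`. Since `avoidTS K` only depends on the conjugacy class of `K`, and a pair lies
outside `avoidTS K` for at most one class, a minimal generating set has exactly one such pair per
class.
-/

theorem InfIrred.lt_sInf_Ioi {α : Type*} [CompleteLattice α] [WellFoundedLT α] {a : α}
    (ha : InfIrred a) : a < sInf (Set.Ioi a) := by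
  obtain ⟨m, hm⟩ := exists_minimal_of_wellFoundedLT (a < ·) ⟨⊤, ha.ne_top.lt_top⟩
  refine hm.prop.trans_le (le_sInf fun b (hb : a < b) => ?_)
  have hmb : a < m ⊓ b := by
    refine (le_inf hm.prop.le hb.le).lt_of_ne fun h => ?_
    rcases ha.2 h.symm with h' | h'
    · exact hm.prop.ne' h'
    · exact hb.ne' h'
  exact inf_eq_left.mp (hm.eq_of_le hmb inf_le_left)

section Conjugation

variable {G : Type*} [Group G]

theorem MeetIrred.infIrred {H : Subgroup G} (hH : MeetIrred H) : InfIrred H := by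
  refine ⟨fun hmax => hH.1 hmax.eq_top, fun A B hAB => ?_⟩
  by_contra! hne
  exact hH.2 ⟨A, B, (hAB ▸ inf_le_left).lt_of_ne hne.1.symm,
    (hAB ▸ inf_le_right).lt_of_ne hne.2.symm, hAB.symm⟩

theorem conjSub_eq_mapSubgroup (g : G) (H : Subgroup G) :
    conjSub g H = MulEquiv.mapSubgroup (MulAut.conj g) H :=
  rfl

theorem conjSub_le_conjSub_iff (g : G) {H K : Subgroup G} :
    conjSub g H ≤ conjSub g K ↔ H ≤ K :=
  (MulEquiv.mapSubgroup (MulAut.conj g)).le_iff_le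

theorem conjSub_lt_conjSub_iff (g : G) {H K : Subgroup G} :
    conjSub g H < conjSub g K ↔ H < K :=
  (MulEquiv.mapSubgroup (MulAut.conj g)).lt_iff_lt

theorem conjSub_conjSub (a b : G) (H : Subgroup G) :
    conjSub a (conjSub b H) = conjSub (a * b) H := by
  simp only [conjSub, Subgroup.map_map, map_mul]
  rfl

theorem conjSub_one (H : Subgroup G) : conjSub 1 H = H := by
  simp only [conjSub, map_one]
  exact H.map_id

theorem conjSub_inv_conjSub (g : G) (H : Subgroup G) : conjSub g⁻¹ (conjSub g H) = H := by
  rw [conjSub_conjSub, inv_mul_cancel, conjSub_one]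

theorem conjSub_sInf_Ioi (g : G) (H : Subgroup G) :
    conjSub g (sInf (Set.Ioi H)) = sInf (Set.Ioi (conjSub g H)) := by
  simp only [conjSub_eq_mapSubgroup, map_sInf, OrderIso.image_Ioi]

def IsConjSub (H K : Subgroup G) : Prop := ∃ g : G, conjSub g H = K

theorem isConjSub_conjSub (g : G) (H : Subgroup G) : IsConjSub H (conjSub g H) := ⟨g, rfl⟩

theorem IsConjSub.refl (H : Subgroup G) : IsConjSub H H := ⟨1, conjSub_one H⟩

theorem IsConjSub.symm {H K : Subgroup G} : IsConjSub H K → IsConjSub K H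
  | ⟨g, hg⟩ => ⟨g⁻¹, hg ▸ conjSub_inv_conjSub g H⟩

theorem IsConjSub.trans {H K L : Subgroup G} : IsConjSub H K → IsConjSub K L → IsConjSub H L
  | ⟨g, hg⟩, ⟨g', hg'⟩ => ⟨g' * g, by rw [← conjSub_conjSub, hg, hg']⟩

theorem IsConjSub.lt_sInf_Ioi {H K : Subgroup G} (hHK : IsConjSub H K)
    (hH : H < sInf (Set.Ioi H)) : K < sInf (Set.Ioi K) := by
  obtain ⟨g, rfl⟩ := hHK
  rwa [← conjSub_sInf_Ioi, conjSub_lt_conjSub_iff]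

end Conjugation

section TransferSystem

variable {G : Type*} [Group G]

namespace IsTransferSystem

variable {T : Set (Subgroup G × Subgroup G)}

theorem le (hT : IsTransferSystem T) {K H : Subgroup G} (h : (K, H) ∈ T) : K ≤ H := hT.1 _ h

theorem refl (hT : IsTransferSystem T) (H : Subgroup G) : (H, H) ∈ T := hT.2.1 H

theorem trans (hT : IsTransferSystem T) {L K H : Subgroup G} (hLK : (L, K) ∈ T)
    (hKH : (K, H) ∈ T) : (L, H) ∈ T :=
  hT.2.2.1 L K H hLK hKH

theorem conj (hT : IsTransferSystem T) {K H : Subgroup G} (h : (K, H) ∈ T) (g : G) :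
    (conjSub g K, conjSub g H) ∈ T :=
  hT.2.2.2.1 K H h g

theorem restrict (hT : IsTransferSystem T) {K H L : Subgroup G} (h : (K, H) ∈ T) (hL : L ≤ H) :
    (K ⊓ L, L) ∈ T :=
  hT.2.2.2.2 K H h L hL

end IsTransferSystem

theorem isTransferSystem_completeTS : IsTransferSystem (completeTS G) :=
  ⟨fun _ hp => hp, fun H => le_refl H,
    fun L K H (hLK : L ≤ K) (hKH : K ≤ H) => show L ≤ H from hLK.trans hKH,
    fun _ _ h g => (conjSub_le_conjSub_iff g).mpr h,
    fun K _ _ L _ => show K ⊓ L ≤ L from inf_le_right⟩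

section Generation

variable {S S' T : Set (Subgroup G × Subgroup G)}

theorem subset_tsGen (S : Set (Subgroup G × Subgroup G)) : S ⊆ tsGen S :=
  fun _ hp => Set.mem_sInter.mpr fun _ hT => hT.2 hp

theorem tsGen_subset (hT : IsTransferSystem T) (hST : S ⊆ T) : tsGen S ⊆ T :=
  Set.sInter_subset_of_mem ⟨hT, hST⟩

theorem tsGen_mono (h : S ⊆ S') : tsGen S ⊆ tsGen S' :=
  Set.sInter_subset_sInter fun _ hT => ⟨hT.1, h.trans hT.2⟩

theorem isTransferSystem_tsGen (hS : S ⊆ completeTS G) : IsTransferSystem (tsGen S) := by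
  have mem {p} (hp : ∀ T, IsTransferSystem T → S ⊆ T → p ∈ T) : p ∈ tsGen S :=
    Set.mem_sInter.mpr fun T hT => hp T hT.1 hT.2
  have mem_of {p T} (hp : p ∈ tsGen S) (hT : IsTransferSystem T) (hST : S ⊆ T) : p ∈ T :=
    tsGen_subset hT hST hp
  refine ⟨fun p hp => mem_of hp isTransferSystem_completeTS hS,
    fun H => mem fun T hT _ => hT.refl H,
    fun L K H hLK hKH => mem fun T hT hST => hT.trans (mem_of hLK hT hST) (mem_of hKH hT hST),
    fun K H h g => mem fun T hT hST => hT.conj (mem_of h hT hST) g,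
    fun K H h L hL => mem fun T hT hST => hT.restrict (mem_of h hT hST) hL⟩

theorem IsMinGenSet.eq_of_subset (hS : IsMinGenSet S T) (hS'S : S' ⊆ S) (hS' : tsGen S' = T) :
    S' = S := by
  refine hS'S.antisymm fun s hs => by_contra fun hs' => ?_
  have : T ⊆ tsGen (S \ {s}) :=
    hS' ▸ tsGen_mono fun t ht => ⟨hS'S ht, fun hts => hs' (hts ▸ ht)⟩
  exact (hS.2.2.2 s hs).not_subset this

end Generation

theorem IsTransferSystem.top_mem [Finite G] {T : Set (Subgroup G × Subgroup G)}
    (hT : IsTransferSystem T) (hcover : ∀ K, MeetIrred K → (K, sInf (Set.Ioi K)) ∈ T)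
    (K : Subgroup G) : (K, ⊤) ∈ T := by
  induction K using WellFoundedGT.induction with
  | _ K ih =>
  by_cases hK : MeetIrred K
  · exact hT.trans (hcover K hK) (ih _ hK.infIrred.lt_sInf_Ioi)
  by_cases hKtop : K = ⊤
  · exact hKtop ▸ hT.refl ⊤
  obtain ⟨A, B, hA, hB, rfl⟩ : ∃ A B, K < A ∧ K < B ∧ K = A ⊓ B := by
    simpa [MeetIrred, hKtop] using hK
  exact hT.trans (hT.restrict (ih A hA) le_top) (ih B hB)

theorem IsTransferSystem.completeTS_subset [Finite G] {T : Set (Subgroup G × Subgroup G)}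
    (hT : IsTransferSystem T) (hcover : ∀ K, MeetIrred K → (K, sInf (Set.Ioi K)) ∈ T) :
    completeTS G ⊆ T := fun p (hp : p.1 ≤ p.2) => by
  have := hT.restrict (hT.top_mem hcover p.1) (le_top : p.2 ≤ ⊤)
  rwa [inf_eq_left.mpr hp] at this

def avoidTS (I : Subgroup G) : Set (Subgroup G × Subgroup G) :=
  {p | p.1 ≤ p.2 ∧ ¬ (IsConjSub I p.1 ∧ sInf (Set.Ioi p.1) ≤ p.2)}

theorem isTransferSystem_avoidTS {I : Subgroup G} (hI : I < sInf (Set.Ioi I)) :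
    IsTransferSystem (avoidTS I) := by
  have lt_cover {K} (hK : IsConjSub I K) : K < sInf (Set.Ioi K) := hK.lt_sInf_Ioi hI
  refine ⟨fun p hp => hp.1, fun H => ⟨le_rfl, fun ⟨hH, hle⟩ => (lt_cover hH).not_ge hle⟩,
    ?_, ?_, ?_⟩
  · rintro L K H ⟨hLK : L ≤ K, hLK'⟩ ⟨hKH : K ≤ H, hKH'⟩
    refine ⟨hLK.trans hKH, fun ⟨hL, hLH⟩ => ?_⟩
    rcases hLK.eq_or_lt with rfl | hlt
    · exact hKH' ⟨hL, hLH⟩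
    · exact hLK' ⟨hL, sInf_le hlt⟩
  · rintro K H ⟨hKH, hKH'⟩ g
    refine ⟨(conjSub_le_conjSub_iff g).mpr hKH, fun ⟨hK, hle⟩ => hKH' ⟨?_, ?_⟩⟩
    · exact hK.trans (isConjSub_conjSub g K).symm
    · rwa [← conjSub_sInf_Ioi, conjSub_le_conjSub_iff] at hle
  · rintro K H ⟨hKH, hKH'⟩ L hLH
    refine ⟨inf_le_right, fun ⟨hKL, hle⟩ => ?_⟩
    rcases (inf_le_left : K ⊓ L ≤ K).eq_or_lt with heq | hlt
    · exact hKH' ⟨heq ▸ hKL, heq ▸ hle.trans hLH⟩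
    · exact (lt_cover hKL).not_ge (le_inf (sInf_le hlt) hle)

theorem avoidTS_congr {I J : Subgroup G} (h : IsConjSub I J) : avoidTS I = avoidTS J := by
  ext p
  exact and_congr_right fun _ => not_congr <| and_congr_left fun _ =>
    ⟨h.symm.trans, h.trans⟩

theorem top_not_mem_avoidTS {I K : Subgroup G} (h : IsConjSub I K) : (K, ⊤) ∉ avoidTS I :=
  fun hK => hK.2 ⟨h, le_top⟩

theorem isConjSub_of_not_mem_avoidTS {I : Subgroup G} {p : Subgroup G × Subgroup G}
    (hp : p.1 ≤ p.2) (h : p ∉ avoidTS I) : IsConjSub I p.1 := by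
  by_contra hI
  exact h ⟨hp, fun h' => hI h'.1⟩

theorem IsTransferSystem.cover_mem_of_not_subset_avoidTS {T : Set (Subgroup G × Subgroup G)}
    (hT : IsTransferSystem T) {I : Subgroup G} (h : ¬ T ⊆ avoidTS I) :
    (I, sInf (Set.Ioi I)) ∈ T := by
  obtain ⟨⟨K, H⟩, hp, hpI⟩ := Set.not_subset.mp h
  obtain ⟨⟨g, rfl⟩, hle⟩ : IsConjSub I K ∧ sInf (Set.Ioi K) ≤ H := by
    by_contra h'
    exact hpI ⟨hT.le hp, h'⟩
  have hcover : (conjSub g I, sInf (Set.Ioi (conjSub g I))) ∈ T := by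
    have := hT.restrict hp hle
    rwa [inf_eq_left.mpr (le_sInf fun _ => le_of_lt)] at this
  simpa [← conjSub_sInf_Ioi, conjSub_inv_conjSub] using hT.conj hcover g⁻¹

theorem tsGen_eq_completeTS_iff [Finite G] {S : Set (Subgroup G × Subgroup G)}
    (hS : S ⊆ completeTS G) :
    tsGen S = completeTS G ↔ ∀ K, MeetIrred K → ¬ S ⊆ avoidTS K := by
  constructor
  · intro hgen K hK hSK
    have := tsGen_subset (isTransferSystem_avoidTS hK.infIrred.lt_sInf_Ioi) hSK
    exact top_not_mem_avoidTS (.refl K) (this (hgen ▸ (le_top : K ≤ ⊤)))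
  · intro hhit
    refine (tsGen_subset isTransferSystem_completeTS hS).antisymm ?_
    refine (isTransferSystem_tsGen hS).completeTS_subset fun K hK => ?_
    exact (isTransferSystem_tsGen hS).cover_mem_of_not_subset_avoidTS
      fun h => hhit K hK ((subset_tsGen S).trans h)

end TransferSystem

section Transversal

variable {G : Type*} [Group G] [Finite G]

structure IsMeetIrredTransversal (W : Set (Subgroup G)) : Prop where
  meetIrred : ∀ I ∈ W, MeetIrred I
  exists_isConjSub : ∀ K, MeetIrred K → ∃ I ∈ W, IsConjSub K I
  eq_of_isConjSub : ∀ I ∈ W, ∀ J ∈ W, IsConjSub I J → I = J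

variable {W : Set (Subgroup G)}

theorem IsMeetIrredTransversal.isMinGenSet_image (hW : IsMeetIrredTransversal W) :
    IsMinGenSet ((fun I => (I, (⊤ : Subgroup G))) '' W) (completeTS G) := by
  set S₀ := (fun I => (I, (⊤ : Subgroup G))) '' W
  have hS₀ : S₀ ⊆ completeTS G := by
    rintro _ ⟨I, -, rfl⟩
    exact le_top (a := I)
  refine ⟨hS₀, ?_, ?_, ?_⟩
  · rintro _ ⟨I, hI, rfl⟩
    exact (hW.meetIrred I hI).1
  · refine (tsGen_eq_completeTS_iff hS₀).2 fun K hK hsub => ?_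
    obtain ⟨I, hI, hKI⟩ := hW.exists_isConjSub K hK
    exact top_not_mem_avoidTS hKI (hsub ⟨I, hI, rfl⟩)
  · rintro _ ⟨I, hI, rfl⟩
    have hsub : S₀ \ {(I, ⊤)} ⊆ completeTS G := Set.sdiff_subset.trans hS₀
    refine (tsGen_subset isTransferSystem_completeTS hsub).ssubset_of_ne fun hgen => ?_
    refine (tsGen_eq_completeTS_iff hsub).1 hgen I (hW.meetIrred I hI) ?_
    rintro _ ⟨⟨J, hJ, rfl⟩, hJI⟩
    exact ⟨le_top, fun ⟨hIJ, _⟩ => hJI (by rw [hW.eq_of_isConjSub I hI J hJ hIJ]; rfl)⟩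

theorem IsMinGenSet.ncard_eq_of_isMeetIrredTransversal {S : Set (Subgroup G × Subgroup G)}
    (hS : IsMinGenSet S (completeTS G)) (hW : IsMeetIrredTransversal W) :
    S.ncard = W.ncard := by
  have hhit (I) (hI : I ∈ W) : ∃ s ∈ S, s ∉ avoidTS I :=
    Set.not_subset.mp ((tsGen_eq_completeTS_iff hS.1).1 hS.2.2.1 I (hW.meetIrred I hI))
  choose f hfS hfI using hhit
  have hconj (I) (hI : I ∈ W) : IsConjSub I (f I hI).1 :=
    isConjSub_of_not_mem_avoidTS (hS.1 (hfS I hI)) (hfI I hI)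
  have hrange : {s | ∃ I, ∃ hI : I ∈ W, f I hI = s} = S := by
    have hsub : {s | ∃ I, ∃ hI : I ∈ W, f I hI = s} ⊆ S := by
      rintro _ ⟨I, hI, rfl⟩
      exact hfS I hI
    refine hS.eq_of_subset hsub ((tsGen_eq_completeTS_iff (hsub.trans hS.1)).2 ?_)
    intro K hK hKsub
    obtain ⟨I, hI, hKI⟩ := hW.exists_isConjSub K hK
    exact hfI I hI (avoidTS_congr hKI ▸ hKsub ⟨I, hI, rfl⟩)
  refine (Set.ncard_congr f hfS (fun I J hI hJ hIJ => ?_) fun s hs => ?_).symm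
  · exact hW.eq_of_isConjSub I hI J hJ ((hconj I hI).trans (hIJ ▸ hconj J hJ).symm)
  · rw [← hrange] at hs
    exact hs

end Transversal

/-- The width of a finite group `G` equals the number of conjugacy classes of
meet-irreducible subgroups of `G`: choosing one representative `I` per conjugacy class,
the pairs `(I, G)` form a minimal generating set of the complete transfer system, and every
minimal generating set of the complete transfer system has that cardinality. -/
theorem width_eq_card_meetIrreducible {G : Type*} [Group G] [Finite G]
    (W : Set (Subgroup G))
    (hW1 : ∀ I ∈ W, MeetIrred I)
    (hW2 : ∀ H : Subgroup G, MeetIrred H → ∃! I, I ∈ W ∧ ∃ g : G, conjSub g H = I) :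
    IsMinGenSet ((fun I => (I, (⊤ : Subgroup G))) '' W) (completeTS G) ∧
    ∀ S : Set (Subgroup G × Subgroup G),
      IsMinGenSet S (completeTS G) → S.ncard = W.ncard := by
  have hW : IsMeetIrredTransversal W :=
    ⟨hW1, fun K hK => (hW2 K hK).exists,
      fun I hI J hJ hIJ => (hW2 I (hW1 I hI)).unique ⟨hI, IsConjSub.refl I⟩ ⟨hJ, hIJ⟩⟩
  exact ⟨hW.isMinGenSet_image, fun S hS => hS.ncard_eq_of_isMeetIrredTransversal hW⟩
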